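/- arXiv:2403.02949 — 2 statements merged into one kernel-verified Lean document; each statement's English description precedes it below -/
import Mathlib

section
/- Generalised Hansen–Bessel formula: for every integer n and every nonzero complex number z (identified with the planar vector x = (Re z, Im z)), one has (1/(2π)) ∫_0^{2π} e^{i n φ} · exp(i·(cos(φ+π/2)·Re z + sin(φ+π/2)·Im z)) dφ = J_n(|z|) · (z/|z|)^n, where (z/|z|)^n = e^{i n arg z}. -/
/-!
Write `z = r e^{iα}` with `r = ‖z‖`, `α = arg z`, and let `f` be the `2π`-periodic integrand
of the Hansen–Bessel formula for `J_n(r)`. Then the integrand on the left is `e^{inα}` times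
`f (α - π/2 - φ)`, and the reflection `φ ↦ c - φ` preserves integrals of periodic functions over
a period, so the left-hand side is `e^{inα} J_n(r)`. The same reflection with `c = π` maps `f` to
its conjugate, which is why the Hansen–Bessel integral is real and `J_n(r)` is not truncated by
taking the real part.
-/

/-- Bessel function of the first kind of integer order `n`, defined via the
Hansen--Bessel formula. -/
noncomputable def besselJ (n : ℤ) (r : ℝ) : ℝ :=
  ((2 * Real.pi : ℂ)⁻¹ * ∫ θ in (0:ℝ)..(2 * Real.pi),
    Complex.exp (Complex.I * ((r * Real.cos θ - (n : ℝ) * (θ + Real.pi / 2) : ℝ) : ℂ))).re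

open Complex Real ComplexConjugate

theorem Function.Periodic.intervalIntegral_comp_sub_left {E : Type*} [NormedAddCommGroup E]
    [NormedSpace ℝ E] {f : ℝ → E} {T : ℝ} (hf : Function.Periodic f T) (c : ℝ) :
    ∫ x in (0 : ℝ)..T, f (c - x) = ∫ x in (0 : ℝ)..T, f x := by
  rw [intervalIntegral.integral_comp_sub_left, sub_zero]
  simpa using hf.intervalIntegral_add_eq (c - T) 0

theorem Complex.cos_mul_re_add_sin_mul_im (z : ℂ) (ψ : ℝ) :
    Real.cos ψ * z.re + Real.sin ψ * z.im = ‖z‖ * Real.cos (ψ - arg z) := by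
  rw [← norm_mul_cos_arg z, ← norm_mul_sin_arg z, Real.cos_sub]
  ring

noncomputable def hansenBesselIntegrand (n : ℤ) (r θ : ℝ) : ℂ :=
  cexp (I * ((r * Real.cos θ - (n : ℝ) * (θ + π / 2) : ℝ) : ℂ))

lemma hansenBesselIntegrand_periodic (n : ℤ) (r : ℝ) :
    Function.Periodic (hansenBesselIntegrand n r) (2 * π) := by
  intro θ
  rw [hansenBesselIntegrand, hansenBesselIntegrand, Real.cos_add_two_pi, exp_eq_exp_iff_exists_int]
  exact ⟨-n, by push_cast; ring⟩

lemma conj_hansenBesselIntegrand (n : ℤ) (r θ : ℝ) :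
    conj (hansenBesselIntegrand n r θ) = hansenBesselIntegrand n r (π - θ) := by
  rw [hansenBesselIntegrand, hansenBesselIntegrand, ← Complex.exp_conj, Real.cos_pi_sub,
    exp_eq_exp_iff_exists_int]
  refine ⟨n, ?_⟩
  simp only [map_mul, conj_I, conj_ofReal]
  push_cast
  ring

lemma ofReal_besselJ (n : ℤ) (r : ℝ) :
    (besselJ n r : ℂ) = (2 * π : ℂ)⁻¹ * ∫ θ in (0 : ℝ)..2 * π, hansenBesselIntegrand n r θ := by
  have hreal : conj (∫ θ in (0 : ℝ)..2 * π, hansenBesselIntegrand n r θ)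
      = ∫ θ in (0 : ℝ)..2 * π, hansenBesselIntegrand n r θ := by
    simp only [← intervalIntegral.intervalIntegral_conj, conj_hansenBesselIntegrand,
      (hansenBesselIntegrand_periodic n r).intervalIntegral_comp_sub_left]
  have hdef : besselJ n r
      = ((2 * π : ℂ)⁻¹ * ∫ θ in (0 : ℝ)..2 * π, hansenBesselIntegrand n r θ).re := rfl
  rw [hdef, ← conj_eq_iff_re.mp hreal]
  norm_cast

lemma exp_mul_exp_planeWave_eq_hansenBesselIntegrand (n : ℤ) (z : ℂ) (φ : ℝ) :
    cexp (I * n * φ) * cexp (I * ((Real.cos (φ + π / 2) * z.re +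
        Real.sin (φ + π / 2) * z.im : ℝ) : ℂ))
      = cexp (I * n * arg z) * hansenBesselIntegrand n ‖z‖ (arg z - π / 2 - φ) := by
  rw [cos_mul_re_add_sin_mul_im, hansenBesselIntegrand, ← Real.cos_neg,
    ← Complex.exp_add, ← Complex.exp_add]
  push_cast
  ring_nf

lemma div_norm_zpow_eq_exp (n : ℤ) {z : ℂ} (hz : z ≠ 0) :
    (z / (‖z‖ : ℂ)) ^ n = cexp (I * n * arg z) := by
  have hnorm : (‖z‖ : ℂ) ≠ 0 := ofReal_ne_zero.mpr (norm_ne_zero_iff.mpr hz)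
  have hunit : z / (‖z‖ : ℂ) = cexp (arg z * I) := by
    rw [div_eq_iff hnorm, mul_comm, norm_mul_exp_arg_mul_I]
  rw [hunit, ← exp_int_mul]
  congr 1
  ring

/-- Generalised Hansen--Bessel formula. -/
theorem generalized_hansen_bessel (n : ℤ) (z : ℂ) (hz : z ≠ 0) :
    (2 * Real.pi : ℂ)⁻¹ * ∫ φ in (0:ℝ)..(2 * Real.pi),
        Complex.exp (Complex.I * (n : ℂ) * (φ : ℂ)) *
          Complex.exp (Complex.I * ((Real.cos (φ + Real.pi / 2) * z.re +
            Real.sin (φ + Real.pi / 2) * z.im : ℝ) : ℂ))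
      = (besselJ n ‖z‖ : ℂ) * (z / (‖z‖ : ℂ)) ^ n := by
  simp only [exp_mul_exp_planeWave_eq_hansenBesselIntegrand]
  rw [intervalIntegral.integral_const_mul,
    (hansenBesselIntegrand_periodic n ‖z‖).intervalIntegral_comp_sub_left, ofReal_besselJ,
    div_norm_zpow_eq_exp n hz]
  ring
end

section
/- Bessel expansion of arbitrarily rotated superposed hexagon lattices: let u_H(r,θ) = (1/3)(e^{i r cos θ} + e^{i r cos(θ+2π/3)} + e^{i r cos(θ−2π/3)}). Then for every real α and all real r and θ, (1/2)·(u_H(r, θ+α) + u_H(r, θ−α)) = Σ_{k∈ℤ} i^{3k} cos(3kα) J_{3k}(r) e^{i 3k θ}, where the sum over k ∈ ℤ converges absolutely. -/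
/-- The hexagon pattern. -/
noncomputable def uH (r θ : ℝ) : ℂ :=
  (1/3) * (Complex.exp (Complex.I * ((r * Real.cos θ : ℝ) : ℂ)) +
    Complex.exp (Complex.I * ((r * Real.cos (θ + 2 * Real.pi / 3) : ℝ) : ℂ)) +
    Complex.exp (Complex.I * ((r * Real.cos (θ - 2 * Real.pi / 3) : ℝ) : ℂ)))

open Complex ComplexConjugate MeasureTheory
open scoped Nat

-- Collects the terms `(a, b)` of a product of two power series in `t` and `t⁻¹` by the exponent
-- `a - b` of `t`.
def subMinEquiv : ℕ × ℕ ≃ ℤ × ℕ where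
  toFun x := ((x.1 : ℤ) - x.2, min x.1 x.2)
  invFun y := (y.2 + y.1.toNat, y.2 + (-y.1).toNat)
  left_inv x := by simp only [Prod.ext_iff]; omega
  right_inv y := by simp only [Prod.ext_iff]; omega

noncomputable def besselITerm (n : ℤ) (z : ℂ) (q : ℕ) : ℂ :=
  (z / 2) ^ (2 * q + n.natAbs) / (q ! * (q + n.natAbs)! : ℂ)

noncomputable def besselI (n : ℤ) (z : ℂ) : ℂ := ∑' q, besselITerm n z q

noncomputable def besselGeneratingTerm (z t : ℂ) (x : ℕ × ℕ) : ℂ :=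
  (z / 2 * t) ^ x.1 / x.1 ! * ((z / 2 * t⁻¹) ^ x.2 / x.2 !)

section GeneratingFunction

variable (z : ℂ)

lemma besselGeneratingTerm_subMinEquiv_symm {t : ℂ} (ht : t ≠ 0) (n : ℤ) (q : ℕ) :
    besselGeneratingTerm z t (subMinEquiv.symm (n, q)) = besselITerm n z q * t ^ n := by
  have key : ∀ a b : ℕ, besselGeneratingTerm z t (a, b) =
      (z / 2) ^ (a + b) * t ^ ((a : ℤ) - b) / (a ! * b !) := by
    intro a b
    simp only [besselGeneratingTerm, zpow_sub₀ ht, zpow_natCast, mul_pow, inv_pow, pow_add]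
    field_simp
  rw [subMinEquiv, Equiv.coe_fn_symm_mk, key, besselITerm]
  obtain ⟨k, rfl | rfl⟩ := Int.eq_nat_or_neg n <;>
    simp only [Int.natAbs_neg, Int.natAbs_natCast, Int.toNat_natCast, Int.toNat_neg_natCast,
      neg_neg] <;>
    push_cast <;> ring_nf

lemma summable_norm_besselGeneratingTerm (t : ℂ) :
    Summable fun x => ‖besselGeneratingTerm z t x‖ := by
  simpa only [besselGeneratingTerm, norm_mul] using
    (NormedSpace.norm_expSeries_div_summable (z / 2 * t)).mul_of_nonneg
      (NormedSpace.norm_expSeries_div_summable (z / 2 * t⁻¹))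
      (fun _ => norm_nonneg _) fun _ => norm_nonneg _

lemma hasSum_besselGeneratingTerm (t : ℂ) :
    HasSum (besselGeneratingTerm z t) (exp (z / 2 * (t + t⁻¹))) := by
  have h := (NormedSpace.expSeries_div_hasSum_exp (z / 2 * t)).mul
    (NormedSpace.expSeries_div_hasSum_exp (z / 2 * t⁻¹))
    (summable_norm_besselGeneratingTerm z t).of_norm
  rwa [← exp_eq_exp_ℂ, ← exp_add, ← mul_add] at h

lemma summable_norm_besselITerm_prod : Summable fun x : ℤ × ℕ => ‖besselITerm x.1 z x.2‖ := by
  have h := subMinEquiv.symm.summable_iff.2 (summable_norm_besselGeneratingTerm z 1)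
  simpa only [Function.comp_def, besselGeneratingTerm_subMinEquiv_symm z one_ne_zero, one_zpow,
    mul_one] using h

lemma hasSum_besselITerm (n : ℤ) : HasSum (besselITerm n z) (besselI n z) :=
  ((summable_norm_besselITerm_prod z).prod_factor n).of_norm.hasSum

lemma summable_norm_besselI : Summable fun n => ‖besselI n z‖ :=
  (summable_norm_besselITerm_prod z).prod.of_nonneg_of_le (fun _ => norm_nonneg _) fun n =>
    norm_tsum_le_tsum_norm ((summable_norm_besselITerm_prod z).prod_factor n)

lemma hasSum_besselI_mul_zpow {t : ℂ} (ht : t ≠ 0) :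
    HasSum (fun n : ℤ => besselI n z * t ^ n) (exp (z / 2 * (t + t⁻¹))) := by
  have h := subMinEquiv.symm.hasSum_iff.2 (hasSum_besselGeneratingTerm z t)
  simp only [Function.comp_def, besselGeneratingTerm_subMinEquiv_symm z ht] at h
  refine h.prod_fiberwise fun n => ?_
  exact (hasSum_besselITerm z n).mul_right (t ^ n)

lemma besselI_neg_arg (n : ℤ) : besselI n (-z) = (-1) ^ n.natAbs * besselI n z := by
  rw [besselI, besselI, ← tsum_mul_left]
  refine tsum_congr fun q => ?_
  rw [besselITerm, besselITerm, neg_div, neg_pow, pow_add, pow_mul]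
  ring

lemma conj_besselI (n : ℤ) : conj (besselI n z) = besselI n (conj z) := by
  rw [besselI, besselI, ← Complex.star_def, tsum_star]
  refine tsum_congr fun q => ?_
  simp [besselITerm]

end GeneratingFunction

lemma hasSum_jacobiAnger (r ψ : ℝ) :
    HasSum (fun n : ℤ => besselI n (I * r) * exp (I * n * ψ))
      (exp (I * ((r * Real.cos ψ : ℝ) : ℂ))) := by
  have h := hasSum_besselI_mul_zpow (I * r) (exp_ne_zero (I * ψ))
  have hcos : I * r / 2 * (exp (I * ψ) + (exp (I * ψ))⁻¹) = I * ((r * Real.cos ψ : ℝ) : ℂ) := by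
    rw [← exp_neg, ofReal_mul, ofReal_cos, Complex.cos, neg_mul, mul_comm (ψ : ℂ) I]
    ring
  simpa only [hcos, ← exp_int_mul, mul_left_comm _ I, mul_assoc] using h

lemma integral_exp_I_mul_int (k : ℤ) :
    ∫ θ in (0:ℝ)..2 * Real.pi, exp (I * k * θ) = if k = 0 then (2 * Real.pi : ℂ) else 0 := by
  split_ifs with hk
  · simp [hk]
  · have hc : I * k ≠ 0 := mul_ne_zero I_ne_zero (Int.cast_ne_zero.2 hk)
    have h1 : I * k * ((2 * Real.pi : ℝ) : ℂ) = k * (2 * Real.pi * I) := by push_cast; ring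
    simp only [integral_exp_mul_complex hc, h1, exp_int_mul_two_pi_mul_I, ofReal_zero, mul_zero,
      exp_zero, sub_self, zero_div]

lemma integral_mul_exp_neg_of_hasSum {a : ℤ → ℂ} {f : ℝ → ℂ} (ha : Summable fun m => ‖a m‖)
    (hf : ∀ θ : ℝ, HasSum (fun m => a m * exp (I * m * θ)) (f θ)) (n : ℤ) :
    ∫ θ in (0:ℝ)..2 * Real.pi, f θ * exp (-(I * n * θ)) = 2 * Real.pi * a n := by
  have hterm : ∀ m : ℤ, ∫ θ in (0:ℝ)..2 * Real.pi, a m * exp (I * m * θ) * exp (-(I * n * θ))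
      = if m = n then 2 * Real.pi * a n else 0 := by
    intro m
    have he : ∀ θ : ℝ,
        a m * exp (I * m * θ) * exp (-(I * n * θ)) = a m * exp (I * (m - n : ℤ) * θ) := by
      intro θ
      rw [mul_assoc, ← exp_add]
      push_cast
      ring_nf
    simp only [he, intervalIntegral.integral_const_mul, integral_exp_I_mul_int, sub_eq_zero]
    split_ifs with h <;> simp [h, mul_comm]
  have hsum : HasSum
      (fun m => ∫ θ in (0:ℝ)..2 * Real.pi, a m * exp (I * m * θ) * exp (-(I * n * θ)))
      (∫ θ in (0:ℝ)..2 * Real.pi, f θ * exp (-(I * n * θ))) := by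
    refine intervalIntegral.hasSum_integral_of_dominated_convergence (fun m _ => ‖a m‖)
      (fun m => by fun_prop) (fun m => ae_of_all _ fun θ _ => ?_) (ae_of_all _ fun _ _ => ha)
      intervalIntegrable_const (ae_of_all _ fun θ _ => (hf θ).mul_right _)
    simp [norm_exp]
  simp only [hterm] at hsum
  exact hsum.unique (hasSum_ite_eq n _)

lemma exp_neg_I_mul_int_mul_pi_div_two (n : ℤ) :
    exp (-(I * n * (Real.pi / 2 : ℝ))) = I ^ (-n) := by
  conv_rhs => rw [← exp_pi_div_two_mul_I, ← exp_int_mul]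
  push_cast
  ring_nf

lemma neg_one_zpow_neg_mul_neg_one_pow_natAbs {R : Type*} [DivisionRing R] (n : ℤ) :
    (-1 : R) ^ (-n) * (-1) ^ n.natAbs = 1 := by
  obtain ⟨k, rfl | rfl⟩ := Int.eq_nat_or_neg n <;> simp [← pow_add]

lemma besselJ_eq (n : ℤ) (r : ℝ) : (besselJ n r : ℂ) = I ^ (-n) * besselI n (I * r) := by
  have hint : ∫ θ in (0:ℝ)..2 * Real.pi,
      exp (I * ((r * Real.cos θ - (n : ℝ) * (θ + Real.pi / 2) : ℝ) : ℂ))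
      = I ^ (-n) * (2 * Real.pi * besselI n (I * r)) := by
    rw [← integral_mul_exp_neg_of_hasSum (summable_norm_besselI _) (hasSum_jacobiAnger r) n,
      ← intervalIntegral.integral_const_mul]
    congr 1 with θ
    rw [← exp_neg_I_mul_int_mul_pi_div_two, ← exp_add, ← exp_add]
    push_cast
    ring_nf
  -- Conjugation multiplies both `I ^ (-n)` and `besselI n (I * r)` by `(-1) ^ n`.
  have hreal : conj (I ^ (-n) * besselI n (I * r)) = I ^ (-n) * besselI n (I * r) := by
    rw [map_mul, map_zpow₀, conj_I, conj_besselI, map_mul, conj_I, conj_ofReal, neg_mul,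
      besselI_neg_arg, neg_eq_neg_one_mul I, mul_zpow]
    linear_combination (I ^ (-n) * besselI n (I * r)) *
      neg_one_zpow_neg_mul_neg_one_pow_natAbs (R := ℂ) n
  have hπ : (2 * Real.pi : ℂ) ≠ 0 := by simp [Real.pi_ne_zero]
  rw [besselJ, hint, mul_left_comm, inv_mul_cancel_left₀ hπ]
  exact conj_eq_iff_re.1 hreal

lemma IsPrimitiveRoot.one_add_zpow_add_zpow_neg {K : Type*} [Field K] {ζ : K}
    (hζ : IsPrimitiveRoot ζ 3) (n : ℤ) : 1 + ζ ^ n + ζ ^ (-n) = if 3 ∣ n then 3 else 0 := by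
  split_ifs with hn
  · rw [(hζ.zpow_eq_one_iff_dvd n).2 (by exact_mod_cast hn), zpow_neg,
      (hζ.zpow_eq_one_iff_dvd n).2 (by exact_mod_cast hn)]
    norm_num
  · have hprim : IsPrimitiveRoot (ζ ^ n) 3 := hζ.zpow_of_gcd_eq_one n (by
      rw [Int.gcd_comm]; exact (Int.isCoprime_iff_gcd_eq_one.1
        ((Int.prime_three.coprime_iff_not_dvd).2 hn)))
    have hsum := hprim.geom_sum_eq_zero (by norm_num)
    have hcube := hprim.pow_eq_one
    rw [Finset.sum_range_succ, Finset.sum_range_succ, Finset.sum_range_one] at hsum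
    rw [zpow_neg, inv_eq_of_mul_eq_one_right (b := (ζ ^ n) ^ 2) (by linear_combination hcube)]
    linear_combination hsum

lemma hasSum_uH (r ψ : ℝ) :
    HasSum (fun k : ℤ => besselI (3 * k) (I * r) * exp (I * (3 * k : ℤ) * ψ)) (uH r ψ) := by
  have hω := isPrimitiveRoot_exp 3 (by norm_num)
  set ω := exp (2 * Real.pi * I / (3 : ℕ))
  have hfilter : ∀ n : ℤ, 1 / 3 * (besselI n (I * r) * exp (I * n * ψ) +
      besselI n (I * r) * exp (I * n * ((ψ + 2 * Real.pi / 3 : ℝ) : ℂ)) +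
      besselI n (I * r) * exp (I * n * ((ψ - 2 * Real.pi / 3 : ℝ) : ℂ)))
      = if 3 ∣ n then besselI n (I * r) * exp (I * n * ψ) else 0 := by
    intro n
    have hplus : exp (I * n * ((ψ + 2 * Real.pi / 3 : ℝ) : ℂ)) = exp (I * n * ψ) * ω ^ n := by
      rw [← exp_int_mul, ← exp_add]; push_cast; ring_nf
    have hminus : exp (I * n * ((ψ - 2 * Real.pi / 3 : ℝ) : ℂ)) = exp (I * n * ψ) * ω ^ (-n) := by
      rw [← exp_int_mul, ← exp_add]; push_cast; ring_nf
    rw [hplus, hminus]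
    have h3 := hω.one_add_zpow_add_zpow_neg n
    split_ifs at h3 ⊢ <;> linear_combination 1 / 3 * besselI n (I * r) * exp (I * n * ψ) * h3
  have h := (((hasSum_jacobiAnger r ψ).add (hasSum_jacobiAnger r (ψ + 2 * Real.pi / 3))).add
    (hasSum_jacobiAnger r (ψ - 2 * Real.pi / 3))).mul_left (1 / 3)
  simp only [hfilter] at h
  have hinj : Function.Injective (fun k : ℤ => 3 * k) := mul_right_injective₀ three_ne_zero
  refine (hinj.hasSum_iff ?_).2 h |>.congr_fun fun k => ?_
  · rintro n hn
    rw [if_neg]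
    rintro ⟨k, rfl⟩
    exact hn ⟨k, rfl⟩
  · simp

lemma I_zpow_mul_besselJ (n : ℤ) (r : ℝ) : I ^ n * besselJ n r = besselI n (I * r) := by
  rw [besselJ_eq, zpow_neg, mul_inv_cancel_left₀ (zpow_ne_zero n I_ne_zero)]

/-- Bessel expansion of the superposition of two hexagon lattices rotated by `±α`. -/
theorem rotated_hexagons_bessel_expansion (α r θ : ℝ) :
    Summable (fun k : ℤ => Complex.I ^ (3 * k) * ((Real.cos (3 * (k : ℝ) * α) : ℝ) : ℂ) *
      (besselJ (3 * k) r : ℂ) * Complex.exp (Complex.I * (3 * (k : ℂ) * (θ : ℂ)))) ∧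
    (∑' k : ℤ, Complex.I ^ (3 * k) * ((Real.cos (3 * (k : ℝ) * α) : ℝ) : ℂ) *
      (besselJ (3 * k) r : ℂ) * Complex.exp (Complex.I * (3 * (k : ℂ) * (θ : ℂ))))
      = (1/2) * (uH r (θ + α) + uH r (θ - α)) := by
  have H := ((hasSum_uH r (θ + α)).add (hasSum_uH r (θ - α))).mul_left (1 / 2)
  have hterm : ∀ k : ℤ, I ^ (3 * k) * ((Real.cos (3 * (k : ℝ) * α) : ℝ) : ℂ) *
      (besselJ (3 * k) r : ℂ) * exp (I * (3 * (k : ℂ) * (θ : ℂ)))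
      = 1 / 2 * (besselI (3 * k) (I * r) * exp (I * (3 * k : ℤ) * ((θ + α : ℝ) : ℂ)) +
        besselI (3 * k) (I * r) * exp (I * (3 * k : ℤ) * ((θ - α : ℝ) : ℂ))) := by
    intro k
    rw [← I_zpow_mul_besselJ, ofReal_cos, Complex.cos]
    have hadd : exp (I * (3 * k : ℤ) * ((θ + α : ℝ) : ℂ))
        = exp (I * (3 * (k : ℂ) * θ)) * exp (((3 * (k : ℝ) * α : ℝ) : ℂ) * I) := by
      rw [← exp_add]; push_cast; ring_nf
    have hsub : exp (I * (3 * k : ℤ) * ((θ - α : ℝ) : ℂ))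
        = exp (I * (3 * (k : ℂ) * θ)) * exp (-(3 * (k : ℝ) * α : ℝ) * I) := by
      rw [← exp_add]; push_cast; ring_nf
    rw [hadd, hsub]
    ring
  have H' := H.congr_fun hterm
  exact ⟨H'.summable, H'.tsum_eq⟩
end
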